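/- Lambda-lifting preserves tail positions: if a subterm N is in tail position in M, then the lifted form N* is in tail position in the lifted form M*. -/

import Mathlib

/-- Values of the small imperative language. -/
inductive Value where
  | unit : Value
  | bool : Bool → Value
  | nat  : Nat → Value
deriving DecidableEq

/-- Terms of the small imperative language. -/
inductive Term where
  | val : Value → Term
  | var : Nat → Term
  | assign : Nat → Term → Term
  | ite : Term → Term → Term → Term
  | seq : Term → Term → Term
  | letrec : Nat → List Nat → Term → Term → Term
  | call : Nat → List Term → Term

/-- Environments of variables: association lists from variables to locations,
lookup takes the leftmost binding. -/
abbrev VEnv := List (Nat × Nat)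

/-- Stores: partial maps from locations to values. -/
abbrev Store := Nat → Option Value

/-- Closures `[λ(x₁,…,xₙ).M, ρ, F]`. -/
inductive Closure where
  | mk (params : List Nat) (body : Term) (env : VEnv) (fenv : List (Nat × Closure))

/-- Environments of functions. -/
abbrev FEnv := List (Nat × Closure)

def Closure.params : Closure → List Nat | .mk ps _ _ _ => ps
def Closure.body : Closure → Term | .mk _ b _ _ => b
def Closure.env : Closure → VEnv | .mk _ _ ρ _ => ρ
def Closure.fenv : Closure → FEnv | .mk _ _ _ F => F

/-- Image of an environment of variables. -/
def EnvIm (ρ : VEnv) : Set Nat := {l | ∃ x, ρ.lookup x = some l}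

/-- Domain of an environment of variables. -/
def EnvDom (ρ : VEnv) : Set Nat := {x | (ρ.lookup x).isSome}

open Classical in
/-- Cleaning a store with respect to an environment:
`s` restricted to `dom s \ Im ρ`. -/
noncomputable def clean (ρ : VEnv) (s : Store) : Store :=
  fun l => if l ∈ EnvIm ρ then none else s l

/-- Store update. -/
def upd (s : Store) (l : Nat) (v : Value) : Store :=
  fun k => if k = l then some v else s k

/-- Updating a store with a list of locations and values. -/
def updList (s : Store) : List Nat → List Value → Store
  | [], _ => s
  | _, [] => s
  | l :: ls, v :: vs => updList (upd s l v) ls vs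

/-- Restricting an environment away from a list of variables. -/
def restrictOut (ρ : VEnv) (xs : List Nat) : VEnv :=
  ρ.filter (fun p => !(xs.contains p.1))

mutual
/-- Set of environments appearing (recursively) in a closure. -/
def Closure.envs : Closure → Set VEnv
  | .mk _ _ ρ F => insert ρ (fenvEnvs F)
/-- `Env(F)`: set of environments appearing (recursively) in closures of `F`. -/
def fenvEnvs : FEnv → Set VEnv
  | [] => ∅
  | (_, c) :: rest => c.envs ∪ fenvEnvs rest
end

/-- `Loc(F)`: a location appears in `F` iff it is in `FLocs F`. -/
def FLocs (F : FEnv) : Set Nat := ⋃ ρ ∈ fenvEnvs F, EnvIm ρ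

/-- A set of environments is aliasing-free. -/
def AliasFree (E : Set VEnv) : Prop :=
  ∀ ρ₁ ∈ E, ∀ ρ₂ ∈ E, ∀ x y l, ρ₁.lookup x = some l → ρ₂.lookup y = some l → x = y

mutual
/-- Compact closures: no captured variable is hidden by a parameter. -/
inductive IsCompactClos : Closure → Prop where
  | mk : ∀ ps b ρ F, (∀ p ∈ ps, ρ.lookup p = none) → IsCompactF F →
      IsCompactClos (.mk ps b ρ F)
/-- Compact environments of functions. -/
inductive IsCompactF : FEnv → Prop where
  | nil : IsCompactF []
  | cons : ∀ f c rest, IsCompactClos c → IsCompactF rest → IsCompactF ((f, c) :: rest)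
end

mutual
/-- Canonical compact form of a closure. -/
def compactClos : Closure → Closure
  | .mk ps b ρ F => .mk ps b (restrictOut ρ ps) (compactFEnv F)
/-- Canonical compact environment `⌊F⌋`. -/
def compactFEnv : FEnv → FEnv
  | [] => []
  | (f, c) :: rest => (f, compactClos c) :: compactFEnv rest
end

mutual
/-- Optimised big-step reduction with split environments `(ρT | ρ)`;
the last argument is the height of the derivation. -/
inductive RedO : FEnv → VEnv → VEnv → Term → Store → Value → Store → Nat → Prop where
  | val : ∀ F ρT ρ v s, RedO F ρT ρ (.val v) s v (clean ρT s) 1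
  | var : ∀ F ρT ρ x l v s, (ρT ++ ρ).lookup x = some l → s l = some v →
      RedO F ρT ρ (.var x) s v (clean ρT s) 1
  | assign : ∀ F ρT ρ x a s v s' l h, RedO F [] (ρT ++ ρ) a s v s' h →
      (ρT ++ ρ).lookup x = some l → (s' l).isSome →
      RedO F ρT ρ (.assign x a) s .unit (clean ρT (upd s' l v)) (h + 1)
  | seq : ∀ F ρT ρ a b s v s' v' s'' h₁ h₂,
      RedO F [] (ρT ++ ρ) a s v s' h₁ → RedO F ρT ρ b s' v' s'' h₂ →
      RedO F ρT ρ (.seq a b) s v' s'' (max h₁ h₂ + 1)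
  | ifTrue : ∀ F ρT ρ a b c s s' v s'' h₁ h₂,
      RedO F [] (ρT ++ ρ) a s (.bool true) s' h₁ → RedO F ρT ρ b s' v s'' h₂ →
      RedO F ρT ρ (.ite a b c) s v s'' (max h₁ h₂ + 1)
  | ifFalse : ∀ F ρT ρ a b c s s' v s'' h₁ h₂,
      RedO F [] (ρT ++ ρ) a s (.bool false) s' h₁ → RedO F ρT ρ c s' v s'' h₂ →
      RedO F ρT ρ (.ite a b c) s v s'' (max h₁ h₂ + 1)
  | letrec : ∀ F ρT ρ f xs a b s v s' h,
      RedO ((f, Closure.mk xs a (restrictOut (ρT ++ ρ) xs) F) :: F) ρT ρ b s v s' h →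
      RedO F ρT ρ (.letrec f xs a b) s v s' (h + 1)
  | call : ∀ F ρT ρ f args xs b ρ' F' vs ls s s₁ s' v h₁ h₂,
      F.lookup f = some (Closure.mk xs b ρ' F') →
      RedArgs F (ρT ++ ρ) args s vs s₁ h₁ →
      vs.length = xs.length → ls.length = xs.length → ls.Nodup →
      (∀ l ∈ ls, s₁ l = none ∧ l ∉ FLocs ((f, Closure.mk xs b ρ' F') :: F')) →
      RedO ((f, Closure.mk xs b ρ' F') :: F') (xs.zip ls) ρ' b (updList s₁ ls vs) v s' h₂ →
      RedO F ρT ρ (.call f args) s v (clean ρT s') (max h₁ h₂ + 1)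
/-- Left-to-right evaluation of a list of arguments (non-tail positions). -/
inductive RedArgs : FEnv → VEnv → List Term → Store → List Value → Store → Nat → Prop where
  | nil : ∀ F ρ s, RedArgs F ρ [] s [] s 0
  | cons : ∀ F ρ a as s v s' vs s'' h₁ h₂,
      RedO F [] ρ a s v s' h₁ → RedArgs F ρ as s' vs s'' h₂ →
      RedArgs F ρ (a :: as) s (v :: vs) s'' (max h₁ h₂)
end

mutual
/-- Naive big-step reduction, with a single environment of variables. -/
inductive RedN : FEnv → VEnv → Term → Store → Value → Store → Prop where
  | val : ∀ F ρ v s, RedN F ρ (.val v) s v s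
  | var : ∀ F ρ x l v s, ρ.lookup x = some l → s l = some v →
      RedN F ρ (.var x) s v s
  | assign : ∀ F ρ x a s v s' l, RedN F ρ a s v s' →
      ρ.lookup x = some l → (s' l).isSome →
      RedN F ρ (.assign x a) s .unit (upd s' l v)
  | seq : ∀ F ρ a b s v s' v' s'',
      RedN F ρ a s v s' → RedN F ρ b s' v' s'' →
      RedN F ρ (.seq a b) s v' s''
  | ifTrue : ∀ F ρ a b c s s' v s'',
      RedN F ρ a s (.bool true) s' → RedN F ρ b s' v s'' →
      RedN F ρ (.ite a b c) s v s''
  | ifFalse : ∀ F ρ a b c s s' v s'',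
      RedN F ρ a s (.bool false) s' → RedN F ρ c s' v s'' →
      RedN F ρ (.ite a b c) s v s''
  | letrec : ∀ F ρ f xs a b s v s',
      RedN ((f, Closure.mk xs a ρ F) :: F) ρ b s v s' →
      RedN F ρ (.letrec f xs a b) s v s'
  | call : ∀ F ρ f args xs b ρ' F' vs ls s s₁ s' v,
      F.lookup f = some (Closure.mk xs b ρ' F') →
      RedNArgs F ρ args s vs s₁ →
      vs.length = xs.length → ls.length = xs.length → ls.Nodup →
      (∀ l ∈ ls, s₁ l = none ∧ l ∉ FLocs ((f, Closure.mk xs b ρ' F') :: F')) →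
      RedN ((f, Closure.mk xs b ρ' F') :: F') (xs.zip ls ++ ρ') b (updList s₁ ls vs) v s' →
      RedN F ρ (.call f args) s v s'
inductive RedNArgs : FEnv → VEnv → List Term → Store → List Value → Store → Prop where
  | nil : ∀ F ρ s, RedNArgs F ρ [] s [] s
  | cons : ∀ F ρ a as s v s' vs s'',
      RedN F ρ a s v s' → RedNArgs F ρ as s' vs s'' →
      RedNArgs F ρ (a :: as) s (v :: vs) s''
end

mutual
/-- Parameter lifting `M*` of a term with respect to the lifted variable `x`
and the set `hs` of designated inner functions. -/
def liftT (x : Nat) (hs : Nat → Bool) : Term → Term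
  | .val v => .val v
  | .var y => .var y
  | .assign y a => .assign y (liftT x hs a)
  | .ite p a b => .ite (liftT x hs p) (liftT x hs a) (liftT x hs b)
  | .seq a b => .seq (liftT x hs a) (liftT x hs b)
  | .letrec f xs a b =>
      .letrec f (if hs f then xs ++ [x] else xs) (liftT x hs a) (liftT x hs b)
  | .call f args =>
      .call f (if hs f then liftArgs x hs args ++ [.var x] else liftArgs x hs args)
def liftArgs (x : Nat) (hs : Nat → Bool) : List Term → List Term
  | [] => []
  | a :: as => liftT x hs a :: liftArgs x hs as
end

/-- Lifted form `F*` of an environment of functions. -/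
def liftF (x : Nat) (hs : Nat → Bool) : FEnv → FEnv
  | [] => []
  | (f, .mk ps b ρ Fc) :: rest =>
      (f, if hs f then Closure.mk (ps ++ [x]) (liftT x hs b) (restrictOut ρ [x]) (liftF x hs Fc)
          else Closure.mk ps (liftT x hs b) ρ (liftF x hs Fc)) :: liftF x hs rest

/-- `Tail N M`: `N` is in tail position in `M`. -/
inductive Tail : Term → Term → Prop where
  | refl : ∀ M, Tail M M
  | seq : ∀ N a b, Tail N b → Tail N (.seq a b)
  | ite_left : ∀ N p a b, Tail N a → Tail N (.ite p a b)
  | ite_right : ∀ N p a b, Tail N b → Tail N (.ite p a b)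
  | letrec : ∀ N f xs a b, Tail N b → Tail N (.letrec f xs a b)

mutual
/-- No call to (nor definition of) a function of `hs` occurs in the term,
except inside the bodies of inner functions where tail calls are allowed. -/
inductive NoHs (hs : Nat → Bool) : Term → Prop where
  | val : ∀ v, NoHs hs (.val v)
  | var : ∀ y, NoHs hs (.var y)
  | assign : ∀ y a, NoHs hs a → NoHs hs (.assign y a)
  | seq : ∀ a b, NoHs hs a → NoHs hs b → NoHs hs (.seq a b)
  | ite : ∀ p a b, NoHs hs p → NoHs hs a → NoHs hs b → NoHs hs (.ite p a b)
  | letrec : ∀ f xs a b, hs f = false → TailOnly hs a → NoHs hs b →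
      NoHs hs (.letrec f xs a b)
  | call : ∀ f args, hs f = false → (∀ a ∈ args, NoHs hs a) → NoHs hs (.call f args)
/-- Functions of `hs` are defined and called exclusively in tail position. -/
inductive TailOnly (hs : Nat → Bool) : Term → Prop where
  | val : ∀ v, TailOnly hs (.val v)
  | var : ∀ y, TailOnly hs (.var y)
  | assign : ∀ y a, NoHs hs a → TailOnly hs (.assign y a)
  | seq : ∀ a b, NoHs hs a → TailOnly hs b → TailOnly hs (.seq a b)
  | ite : ∀ p a b, NoHs hs p → TailOnly hs a → TailOnly hs b → TailOnly hs (.ite p a b)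
  | letrec : ∀ f xs a b, TailOnly hs a → TailOnly hs b → TailOnly hs (.letrec f xs a b)
  | call : ∀ f args, (∀ a ∈ args, NoHs hs a) → TailOnly hs (.call f args)
end

/-- Subterm relation. -/
inductive Subterm : Term → Term → Prop where
  | refl : ∀ M, Subterm M M
  | assign : ∀ N y a, Subterm N a → Subterm N (.assign y a)
  | seq_l : ∀ N a b, Subterm N a → Subterm N (.seq a b)
  | seq_r : ∀ N a b, Subterm N b → Subterm N (.seq a b)
  | ite_c : ∀ N p a b, Subterm N p → Subterm N (.ite p a b)
  | ite_l : ∀ N p a b, Subterm N a → Subterm N (.ite p a b)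
  | ite_r : ∀ N p a b, Subterm N b → Subterm N (.ite p a b)
  | letrec_body : ∀ N f xs a b, Subterm N a → Subterm N (.letrec f xs a b)
  | letrec_cont : ∀ N f xs a b, Subterm N b → Subterm N (.letrec f xs a b)
  | call : ∀ N f args a, a ∈ args → Subterm N a → Subterm N (.call f args)

/-- `BindsF F f c`: the closure `c` is bound to `f` somewhere (recursively) in `F`. -/
inductive BindsF : FEnv → Nat → Closure → Prop where
  | head : ∀ f c rest, BindsF ((f, c) :: rest) f c
  | tail : ∀ g d rest f c, BindsF rest f c → BindsF ((g, d) :: rest) f c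
  | nest : ∀ g d rest f c, BindsF d.fenv f c → BindsF ((g, d) :: rest) f c

/-- `LocalDef f M`: `f` is defined in local position in `M`. -/
inductive LocalDef : Nat → Term → Prop where
  | here : ∀ f xs a b, LocalDef f (.letrec f xs a b)
  | assign : ∀ f y a, LocalDef f a → LocalDef f (.assign y a)
  | seq_l : ∀ f a b, LocalDef f a → LocalDef f (.seq a b)
  | seq_r : ∀ f a b, LocalDef f b → LocalDef f (.seq a b)
  | ite_c : ∀ f p a b, LocalDef f p → LocalDef f (.ite p a b)
  | ite_l : ∀ f p a b, LocalDef f a → LocalDef f (.ite p a b)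
  | ite_r : ∀ f p a b, LocalDef f b → LocalDef f (.ite p a b)
  | letrec_cont : ∀ f g xs a b, LocalDef f b → LocalDef f (.letrec g xs a b)
  | call : ∀ f g args a, a ∈ args → LocalDef f a → LocalDef f (.call g args)

/-- `DefinedIn f M`: `f` is defined by some letrec anywhere in `M`. -/
inductive DefinedIn : Nat → Term → Prop where
  | here : ∀ f xs a b, DefinedIn f (.letrec f xs a b)
  | assign : ∀ f y a, DefinedIn f a → DefinedIn f (.assign y a)
  | seq_l : ∀ f a b, DefinedIn f a → DefinedIn f (.seq a b)
  | seq_r : ∀ f a b, DefinedIn f b → DefinedIn f (.seq a b)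
  | ite_c : ∀ f p a b, DefinedIn f p → DefinedIn f (.ite p a b)
  | ite_l : ∀ f p a b, DefinedIn f a → DefinedIn f (.ite p a b)
  | ite_r : ∀ f p a b, DefinedIn f b → DefinedIn f (.ite p a b)
  | letrec_body : ∀ f g xs a b, DefinedIn f a → DefinedIn f (.letrec g xs a b)
  | letrec_cont : ∀ f g xs a b, DefinedIn f b → DefinedIn f (.letrec g xs a b)
  | call : ∀ f g args a, a ∈ args → DefinedIn f a → DefinedIn f (.call g args)

/-- Extended liftability of the parameter `x` (of function `g`, with designated
inner functions `hs`) in `(M, F, ρT, ρ)`. -/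
structure ExtLiftable (x g : Nat) (hs : Nat → Bool) (M : Term) (F : FEnv)
    (ρT ρ : VEnv) : Prop where
  param_def : (∃ xs a b, Subterm (.letrec g xs a b) M ∧ x ∈ xs) ∨
              (∃ c, BindsF F g c ∧ x ∈ c.params)
  tail_in_M : TailOnly hs M
  tail_in_F : ∀ f c, BindsF F f c → TailOnly hs c.body
  local_iff : ∀ f, LocalDef f M → (((ρT ++ ρ).lookup x).isSome ↔ hs f = true)
  tail_call_dom : (∃ f args, hs f = true ∧ Tail (.call f args) M) → (ρT.lookup x).isSome
  x_in_hs_envs : ∀ f c, BindsF F f c → ((c.env.lookup x).isSome ↔ hs f = true)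
  compactF : IsCompactF F
  aliasfree : AliasFree (fenvEnvs F ∪ {ρ, ρT})

/-- Simple liftability of `x` in a term `M`: `x` is a parameter of a function `g`
whose inner functions (the `hs`) are called exclusively in tail position. -/
def SimpleLiftable (x : Nat) (hs : Nat → Bool) (M : Term) : Prop :=
  ∃ g xs a b, Subterm (.letrec g xs a b) M ∧ x ∈ xs ∧
    (∀ f, hs f = true ↔ DefinedIn f a) ∧ TailOnly hs a

/-- Renaming a location in an environment. -/
def renEnv (l l' : Nat) (ρ : VEnv) : VEnv :=
  ρ.map (fun p => (p.1, if p.2 = l then l' else p.2))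

/-- Renaming a location in a store. -/
def renStore (l l' : Nat) (s : Store) : Store :=
  fun k => if k = l' then s l else if k = l then none else s k

mutual
/-- Renaming a location in a closure. -/
def renClos (l l' : Nat) : Closure → Closure
  | .mk ps b ρ F => .mk ps b (renEnv l l' ρ) (renF l l' F)
/-- Renaming a location in an environment of functions. -/
def renF (l l' : Nat) : FEnv → FEnv
  | [] => []
  | (f, c) :: rest => (f, renClos l l' c) :: renF l l' rest
end

/-- `x` does not occur in `M`: not as a variable, assignment target or function
parameter, and no function of `hs` occurs as callee or definiendum. -/
def Avoids (x : Nat) (hs : Nat → Bool) : Term → Prop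
  | .val _ => True
  | .var y => y ≠ x
  | .assign y a => y ≠ x ∧ Avoids x hs a
  | .ite p a b => Avoids x hs p ∧ Avoids x hs a ∧ Avoids x hs b
  | .seq a b => Avoids x hs a ∧ Avoids x hs b
  | .letrec f xs a b => hs f = false ∧ x ∉ xs ∧ Avoids x hs a ∧ Avoids x hs b
  | .call f args => hs f = false ∧ ∀ a ∈ args, Avoids x hs a

/-- Lambda-lifting preserves tail positions: if `N` is in tail position in `M`,
then `N*` is in tail position in `M*`. -/
theorem lift_preserves_tail (x : Nat) (hs : Nat → Bool) (N M : Term)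
    (h : Tail N M) : Tail (liftT x hs N) (liftT x hs M) := by
  induction h with
  | refl => exact .refl _
  | seq _ _ _ ih => exact .seq _ _ _ ih
  | ite_left _ _ _ _ ih => exact .ite_left _ _ _ _ ih
  | ite_right _ _ _ _ ih => exact .ite_right _ _ _ _ ih
  | letrec _ _ _ _ _ ih => exact .letrec _ _ _ _ _ ih
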